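/- Let G be a MAP instance, let {v,w} be a bad-pair of G with bp-components C₁,…,C_k, and pick any index j ∈ {1,…,k}. Let H_j be a 2-ECSS of C_j^{v,w}, and for each i ∈ {1,…,k} with i ≠ j let Hᵢ be a 2-ECSS of Cᵢ^⊘. Then the union of the edge sets of H₁,…,H_k is the edge set of a 2-ECSS of G. -/

import Mathlib

set_option autoImplicit false

/-!  A formal framework for the Matching Augmentation Problem (MAP):
loopless multigraphs with edge costs in `{0,1}` (given by the predicate
`isZero` marking the zero-edges). -/

/-- A finite loopless multigraph together with `{0,1}` edge costs:
`isZero e` means that the edge `e` has cost zero (otherwise it is a unit-edge). -/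
structure CostGraph where
  V : Type
  E : Type
  finV : Finite V
  finE : Finite E
  ends : E → Sym2 V
  loopless : ∀ e, ¬ (ends e).IsDiag
  isZero : E → Prop

namespace CostGraph

variable (G : CostGraph)

/-- `x` and `y` are joined by an edge of `F` and both lie in the node set `S`. -/
def Adj (S : Set G.V) (F : Set G.E) (x y : G.V) : Prop :=
  x ∈ S ∧ y ∈ S ∧ ∃ e ∈ F, G.ends e = s(x, y)

/-- Reachability in the sub-multigraph with node set `S` and edge set `F`. -/
def Reachable (S : Set G.V) (F : Set G.E) (x y : G.V) : Prop :=
  Relation.ReflTransGen (G.Adj S F) x y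

/-- The sub-multigraph with node set `S` and those edges of `F` having both
end nodes in `S` is connected (in particular `S` is nonempty). -/
def ConnectedOn (S : Set G.V) (F : Set G.E) : Prop :=
  S.Nonempty ∧ ∀ x ∈ S, ∀ y ∈ S, G.Reachable S F x y

/-- The sub-multigraph with node set `S` and edge set `F` is 2-edge-connected:
it has at least two nodes and removing any one edge leaves it connected. -/
def TwoECOn (S : Set G.V) (F : Set G.E) : Prop :=
  1 < S.ncard ∧ G.ConnectedOn S F ∧ ∀ e : G.E, G.ConnectedOn S (F \ {e})

/-- `F` is the edge set of a 2-edge-connected spanning subgraph (2-ECSS) of `G`. -/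
def TwoEC (F : Set G.E) : Prop := G.TwoECOn Set.univ F

/-- The cost of a set of edges: the number of unit-edges in it. -/
noncomputable def cost (F : Set G.E) : ℕ := {e ∈ F | ¬ G.isZero e}.ncard

/-- `opt G` is the minimum cost of a 2-ECSS of `G`. -/
noncomputable def opt : ℕ := sInf (G.cost '' {F | G.TwoEC F})

/-- `F` is a 2-edge cover: every node is incident to at least two edges of `F`. -/
def TwoEdgeCover (F : Set G.E) : Prop :=
  ∀ v : G.V, 2 ≤ {e ∈ F | v ∈ G.ends e}.ncard

/-- `tau G` is the minimum cost of a 2-edge cover of `G`. -/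
noncomputable def tau : ℕ := sInf (G.cost '' {F | G.TwoEdgeCover F})

/-- The zero-edges form a matching: no two distinct zero-edges share an end node. -/
def ZeroMatching : Prop :=
  ∀ e f : G.E, G.isZero e → G.isZero f → e ≠ f → ∀ x : G.V, x ∈ G.ends e → x ∉ G.ends f

/-- A MAP instance: a (finite, loopless) multigraph with `{0,1}` edge costs whose
zero-edges form a matching and which is 2-edge-connected. -/
def IsMAP : Prop := G.ZeroMatching ∧ G.TwoEC Set.univ

/-- The degree of a node: the number of edges incident to it. -/
noncomputable def degree (v : G.V) : ℕ := {e : G.E | v ∈ G.ends e}.ncard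

/-- `e, f` form a `{0,1}`-edge-pair: parallel edges, `e` of cost zero, `f` of cost one. -/
def IsZeroOnePair (e f : G.E) : Prop :=
  e ≠ f ∧ G.ends e = G.ends f ∧ G.isZero e ∧ ¬ G.isZero f

/-- `G` has no `{0,1}`-edge-pairs. -/
def NoZeroOnePair : Prop := ∀ e f, ¬ G.IsZeroOnePair e f

/-- `v` is a cut node: deleting `v` leaves a disconnected (or empty) graph. -/
def IsCutNode (v : G.V) : Prop := ¬ G.ConnectedOn ({v}ᶜ) Set.univ

/-- `{v, w}` is a bad-pair: `vw` is a zero-edge and deleting both `v` and `w`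
disconnects the graph. -/
def IsBadPair (v w : G.V) : Prop :=
  (∃ e, G.isZero e ∧ G.ends e = s(v, w)) ∧
    ¬ G.ConnectedOn (({v, w} : Set G.V)ᶜ) Set.univ

/-- The number of bad-pairs of `G` (counted as unordered pairs). -/
noncomputable def badPairCount : ℕ :=
  {z : Sym2 G.V | ∃ a b, z = s(a, b) ∧ G.IsBadPair a b}.ncard

/-- `C` is (the node set of) a connected component of the sub-multigraph with node
set `S` and edge set `F`. -/
def IsCompOf (S : Set G.V) (F : Set G.E) (C : Set G.V) : Prop :=
  C ⊆ S ∧ C.Nonempty ∧ G.ConnectedOn C F ∧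
    ∀ x ∈ C, ∀ y ∈ S, G.Adj S F x y → y ∈ C

/-- `Q` is the node set of a redundant 4-cycle: a 4-cycle `u₁u₂u₃u₄` with
`V(C) ≠ V(G)`, two non-adjacent edges of cost zero and two non-adjacent nodes
of degree two in `G`. -/
def IsRed4CycleOn (Q : Set G.V) : Prop :=
  ∃ (u₁ u₂ u₃ u₄ : G.V) (e₁ e₂ e₃ e₄ : G.E),
    Q = {u₁, u₂, u₃, u₄} ∧
    u₁ ≠ u₂ ∧ u₁ ≠ u₃ ∧ u₁ ≠ u₄ ∧ u₂ ≠ u₃ ∧ u₂ ≠ u₄ ∧ u₃ ≠ u₄ ∧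
    e₁ ≠ e₂ ∧ e₁ ≠ e₃ ∧ e₁ ≠ e₄ ∧ e₂ ≠ e₃ ∧ e₂ ≠ e₄ ∧ e₃ ≠ e₄ ∧
    G.ends e₁ = s(u₁, u₂) ∧ G.ends e₂ = s(u₂, u₃) ∧
    G.ends e₃ = s(u₃, u₄) ∧ G.ends e₄ = s(u₄, u₁) ∧
    G.isZero e₁ ∧ G.isZero e₃ ∧
    G.degree u₂ = 2 ∧ G.degree u₄ = 2 ∧
    Q ≠ Set.univ

/-- A well-structured MAP instance: no `{0,1}`-edge-pairs, no redundant 4-cycles,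
no cut nodes and no bad-pairs. -/
def WellStructured : Prop :=
  G.IsMAP ∧ G.NoZeroOnePair ∧ (∀ Q, ¬ G.IsRed4CycleOn Q) ∧
    (∀ v, ¬ G.IsCutNode v) ∧ (∀ v w, ¬ G.IsBadPair v w)

/-- `G` is 2-node-connected: more than two nodes and deleting any one node
leaves a connected graph. -/
def TwoNC : Prop :=
  2 < Nat.card G.V ∧ ∀ v : G.V, G.ConnectedOn ({v}ᶜ) Set.univ

/-- Bridge of the sub-multigraph with node set `S` and edge set `F`: an edge of `F`
inside `S` whose removal disconnects its end nodes. -/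
def IsBridgeOn (S : Set G.V) (F : Set G.E) (e : G.E) : Prop :=
  e ∈ F ∧ (∀ x ∈ G.ends e, x ∈ S) ∧
    ∀ x y, G.ends e = s(x, y) → ¬ G.Reachable S (F \ {e}) x y

/-- Bridge of the spanning subgraph `(V, F)`. -/
def IsBridge (F : Set G.E) (e : G.E) : Prop := G.IsBridgeOn Set.univ F e

/-- `B` is (the node set of) a 2ec-block of the spanning subgraph `(V, F)`:
a maximal connected bridgeless subgraph with at least two nodes, equivalently a
connected component with at least two nodes of the graph obtained by deleting
all bridges. -/
def IsTwoECBlock (F : Set G.E) (B : Set G.V) : Prop :=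
  G.IsCompOf Set.univ (F \ {e | G.IsBridge F e}) B ∧ 2 ≤ B.ncard

/-- Delete a set `D` of edges. -/
noncomputable def deleteEdges (D : Set G.E) : CostGraph where
  V := G.V
  E := {e : G.E // e ∉ D}
  finV := G.finV
  finE := by haveI := G.finE; exact Subtype.finite
  ends e := G.ends e.1
  loopless e := G.loopless e.1
  isZero e := G.isZero e.1

/-- The sub-instance induced on a set `S` of nodes. -/
noncomputable def induce (S : Set G.V) : CostGraph where
  V := ↥S
  E := {e : G.E // ∀ x ∈ G.ends e, x ∈ S}
  finV := by haveI := G.finV; exact Subtype.finite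
  finE := by haveI := G.finE; exact Subtype.finite
  ends e := (G.ends e.1).pmap Subtype.mk e.2
  loopless e := by
    intro hd
    exact G.loopless e.1
      (by simpa [Sym2.pmap_subtype_map_subtypeVal] using hd.map (f := Subtype.val))
  isZero e := G.isZero e.1

/-- Contraction of `G` along (the equivalence generated by) a relation `R`:
node classes are identified, and edges joining identified nodes are removed
(no loops are created). -/
noncomputable def contract (R : G.V → G.V → Prop) : CostGraph where
  V := Quotient (Relation.EqvGen.setoid R)
  E := {e : G.E // ¬ (Sym2.map (Quotient.mk (Relation.EqvGen.setoid R)) (G.ends e)).IsDiag}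
  finV := by haveI := G.finV; exact Quotient.finite _
  finE := by haveI := G.finE; exact Subtype.finite
  ends e := Sym2.map (Quotient.mk (Relation.EqvGen.setoid R)) (G.ends e.1)
  loopless e := e.2
  isZero e := G.isZero e.1

/-- The relation identifying the nodes of each redundant 4-cycle. -/
def red4Rel (x y : G.V) : Prop := ∃ Q, G.IsRed4CycleOn Q ∧ x ∈ Q ∧ y ∈ Q

/-- The multigraph obtained from `G` by contracting all redundant 4-cycles. -/
noncomputable def contractRed4 : CostGraph := G.contract G.red4Rel

/-- For a bad-pair `{v,w}` and a bp-component `C`: the sub-instance `C^{v,w}`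
induced on `V(C) ∪ {v, w}`. -/
noncomputable def bpUp (v w : G.V) (C : Set G.V) : CostGraph :=
  G.induce (C ∪ {v, w})

/-- For a bad-pair `{v,w}` and a bp-component `C`: the instance `C^⊘`, obtained
from `C^{v,w}` by contracting the zero-edge `vw` if `C` has at least two nodes,
and equal to `C^{v,w}` if `C` has exactly one node. -/
noncomputable def bpContr (v w : G.V) (C : Set G.V) : CostGraph :=
  if 2 ≤ C.ncard then
    (G.bpUp v w C).contract (fun x y => x.1 = v ∧ y.1 = w)
  else G.bpUp v w C

/-- Every edge of `C^⊘` is an edge of `G`. -/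
noncomputable def bpContrEdge (v w : G.V) (C : Set G.V) :
    (G.bpContr v w C).E → G.E := by
  unfold bpContr
  by_cases h : 2 ≤ C.ncard
  · rw [if_pos h]; exact fun e => e.1.1
  · rw [if_neg h]; exact fun e => e.1

/-- The sub-multigraph `(S, F)` is 2-node-connected. -/
def TwoNCOn (S : Set G.V) (F : Set G.E) : Prop :=
  2 < S.ncard ∧ ∀ v : G.V, G.ConnectedOn (S \ {v}) F

/-- The sub-multigraph `(S, F)` consists of two nodes joined by two parallel edges. -/
def IsParallelPairBlock (S : Set G.V) (F : Set G.E) : Prop :=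
  S.ncard = 2 ∧ ∃ e f, e ≠ f ∧ G.ends e = G.ends f ∧ F = {e, f}

/-- `(B i, F i)` (for `i : Fin k`) are the blocks of `G`: each block is 2-node-connected
or a pair of nodes joined by two parallel edges, the edge set of `G` is partitioned
among the blocks, each `B i` is the set of end nodes of the edges of `F i`, and any
two blocks share at most one node. -/
def IsBlockDecomp {k : ℕ} (B : Fin k → Set G.V) (F : Fin k → Set G.E) : Prop :=
  (∀ i, ∀ e ∈ F i, ∀ x ∈ G.ends e, x ∈ B i) ∧
  (∀ i, B i = {x | ∃ e ∈ F i, x ∈ G.ends e}) ∧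
  (Set.univ : Set G.E) = ⋃ i, F i ∧
  (∀ i j, i ≠ j → Disjoint (F i) (F j)) ∧
  (∀ i j, i ≠ j → (B i ∩ B j).ncard ≤ 1) ∧
  (∀ i, G.TwoNCOn (B i) (F i) ∨ G.IsParallelPairBlock (B i) (F i))

end CostGraph

/-- `TauHatRel G t` holds when `t` is a value of `τ̂` for `G`, i.e. a value obtainable
by the following recursion: if `G` has no redundant 4-cycles and no cut nodes
(so it is well-structured provided it has no `{0,1}`-edge-pairs and no bad-pairs)
then `τ̂(G) = τ(G)`; otherwise contract all (`q`, say) redundant 4-cycles of `G`,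
split the resulting graph at its cut nodes into its blocks `G₁, …, G_k`, and set
`τ̂(G) = 2q + τ̂(G₁) + … + τ̂(G_k)`. -/
inductive TauHatRel : CostGraph → ℕ → Prop where
  | base (G : CostGraph)
      (h4 : ∀ Q, ¬ G.IsRed4CycleOn Q) (hc : ∀ v, ¬ G.IsCutNode v) :
      TauHatRel G G.tau
  | step (G : CostGraph) (k : ℕ)
      (B : Fin k → Set G.contractRed4.V) (F : Fin k → Set G.contractRed4.E)
      (t : Fin k → ℕ)
      (hobstr : (∃ Q, G.IsRed4CycleOn Q) ∨ (∃ v, G.IsCutNode v))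
      (hdec : G.contractRed4.IsBlockDecomp B F)
      (ht : ∀ i, TauHatRel (G.contractRed4.induce (B i)) (t i)) :
      TauHatRel G (2 * {Q | G.IsRed4CycleOn Q}.ncard + ∑ i, t i)

namespace CostGraph

/-- `τ̂(G)`: the value associated to `G` by the recursion of `TauHatRel`. -/
noncomputable def tauHat (G : CostGraph) : ℕ := sInf {t | TauHatRel G t}

open Classical in
/-- The lower bound `lb(G)`: `τ̂(G)` if `G` has no `{0,1}`-edge-pairs, no cut nodes
and no bad-pairs, and `opt(G)` otherwise. -/
noncomputable def lb (G : CostGraph) : ℕ :=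
  if G.NoZeroOnePair ∧ (∀ v, ¬ G.IsCutNode v) ∧ (∀ v w, ¬ G.IsBadPair v w)
  then G.tauHat else G.opt

end CostGraph

/-!
Deleting at most one edge from the union deletes at most one edge from each piece, so every
piece stays connected. Piece `j` is a genuine subgraph of `G`, so it joins `v` to `w` in `G`;
given that, a path in a contracted piece `C_i^⊘` lifts to `G`, each passage through the
contracted node being replaced by the `v`–`w` connection. As every node other than `v, w`
lies in some bp-component, everything is joined to `v`.
-/

namespace CostGraph

variable {G : CostGraph}

theorem Adj.symm {S : Set G.V} {F : Set G.E} {x y : G.V} (h : G.Adj S F x y) :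
    G.Adj S F y x :=
  let ⟨hx, hy, e, he, hends⟩ := h
  ⟨hy, hx, e, he, hends.trans Sym2.eq_swap⟩

theorem reachable_equivalence (S : Set G.V) (F : Set G.E) : Equivalence (G.Reachable S F) :=
  ⟨fun _ => .refl, fun h => .mono (fun _ _ => Adj.symm) _ _ (Relation.ReflTransGen.swap _ _ h),
    Relation.ReflTransGen.trans⟩

theorem TwoECOn.connectedOn_sdiff {S : Set G.V} {F D : Set G.E} (h : G.TwoECOn S F)
    (hD : D.Subsingleton) : G.ConnectedOn S (F \ D) := by
  obtain rfl | ⟨e, rfl⟩ := hD.eq_empty_or_singleton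
  · simpa using h.2.1
  · exact h.2.2 e

theorem Reachable.apply_eq {α : Type*} {f : G.V → α} {S : Set G.V} {F : Set G.E}
    (hf : ∀ e ∈ F, ∀ x y, G.ends e = s(x, y) → f x = f y) {x y : G.V}
    (h : G.Reachable S F x y) : f x = f y := by
  induction h with
  | refl => rfl
  | tail _ hadj ih =>
    obtain ⟨-, -, e, he, hends⟩ := hadj
    exact ih.trans (hf e he _ _ hends)

theorem reachable_setOf_reachable {S : Set G.V} {F : Set G.E} {x y : G.V}
    (h : G.Reachable S F x y) : G.Reachable {z | z ∈ S ∧ G.Reachable S F x z} F x y := by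
  induction h with
  | refl => exact .refl
  | tail hxz hadj ih =>
    exact ih.tail ⟨⟨hadj.1, hxz⟩, ⟨hadj.2.1, hxz.tail hadj⟩, hadj.2.2⟩

theorem exists_isCompOf_mem {S : Set G.V} (F : Set G.E) {x : G.V} (hx : x ∈ S) :
    ∃ D, G.IsCompOf S F D ∧ x ∈ D := by
  set D := {z | z ∈ S ∧ G.Reachable S F x z}
  have hxD : x ∈ D := ⟨hx, .refl⟩
  have hconn : G.ConnectedOn D F := ⟨⟨x, hxD⟩, fun y hy z hz =>
    ((reachable_equivalence _ F).symm (reachable_setOf_reachable hy.2)).trans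
      (reachable_setOf_reachable hz.2)⟩
  have hclosed : ∀ y ∈ D, ∀ z ∈ S, G.Adj S F y z → z ∈ D :=
    fun _ hy _ hz hadj => ⟨hz, hy.2.tail hadj⟩
  exact ⟨D, ⟨fun _ hz => hz.1, ⟨x, hxD⟩, hconn, hclosed⟩, hxD⟩

theorem induce_ends_eq {S : Set G.V} {e : (G.induce S).E} {x y : S}
    (h : (G.induce S).ends e = s(x, y)) : G.ends e.1 = s(x.1, y.1) := by
  simpa [induce, Sym2.pmap_subtype_map_subtypeVal] using congrArg (Sym2.map Subtype.val) h

theorem ncard_univ_induce_le (S : Set G.V) :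
    (Set.univ : Set (G.induce S).V).ncard ≤ (Set.univ : Set G.V).ncard := by
  have := G.finV
  rw [Set.ncard_univ, Set.ncard_univ]
  exact Finite.card_subtype_le (· ∈ S)

theorem ConnectedOn.induce_apply_eq {α : Type*} {f : G.V → α} {S : Set G.V}
    {F : Set (G.induce S).E} (hc : (G.induce S).ConnectedOn Set.univ F)
    (hf : ∀ e ∈ F, ∀ x y, G.ends e.1 = s(x, y) → f x = f y) :
    ∀ x ∈ S, ∀ y ∈ S, f x = f y := fun x hx y hy =>
  Reachable.apply_eq (f := fun z : S => f z)
    (fun e he _ _ hends => hf e he _ _ (induce_ends_eq hends))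
    (hc.2 ⟨x, hx⟩ trivial ⟨y, hy⟩ trivial)

theorem ConnectedOn.contract_apply_eq {α : Type*} {f : G.V → α} {R : G.V → G.V → Prop}
    {F : Set (G.contract R).E} (hc : (G.contract R).ConnectedOn Set.univ F)
    (hR : ∀ x y, R x y → f x = f y)
    (hf : ∀ e ∈ F, ∀ x y, G.ends e.1 = s(x, y) → f x = f y)
    (x y : G.V) : f x = f y := by
  let f' : (G.contract R).V → α := Quotient.lift f fun a b (hab : Relation.EqvGen R a b) =>
    Relation.EqvGen.rec hR (fun _ => rfl) (fun _ _ _ h => h.symm)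
      (fun _ _ _ _ _ h h' => h.trans h') hab
  refine Reachable.apply_eq (f := f') ?_ (hc.2 ⟦x⟧ trivial ⟦y⟧ trivial)
  intro e he c d hends
  obtain ⟨a, b, hab⟩ : ∃ a b, G.ends e.1 = s(a, b) :=
    (G.ends e.1).inductionOn fun a b => ⟨a, b, rfl⟩
  have hcd : s(⟦a⟧, ⟦b⟧) = s(c, d) := by
    simpa [contract, hab] using hends
  rcases Sym2.eq_iff.mp hcd with ⟨rfl, rfl⟩ | ⟨rfl, rfl⟩
  · exact hf e he a b hab
  · exact (hf e he a b hab).symm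

theorem bpContr_cases {v w : G.V} {C : Set G.V} (P : (H : CostGraph) → (H.E → G.E) → Prop)
    (hcontr : 2 ≤ C.ncard →
      P ((G.bpUp v w C).contract fun x y => x.1 = v ∧ y.1 = w) fun e => e.1.1)
    (hup : ¬ 2 ≤ C.ncard → P (G.bpUp v w C) fun e => e.1) :
    P (G.bpContr v w C) (G.bpContrEdge v w C) := by
  unfold bpContr bpContrEdge
  by_cases h : 2 ≤ C.ncard
  · simp only [dif_pos h, id]
    generalize_proofs hE
    revert hE
    rw [if_pos h]
    exact fun _ => hcontr h
  · simp only [dif_neg h, id]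
    generalize_proofs hE
    revert hE
    rw [if_neg h]
    exact fun _ => hup h

theorem bpContrEdge_injective (v w : G.V) (C : Set G.V) :
    Function.Injective (G.bpContrEdge v w C) :=
  bpContr_cases (fun _ π => Function.Injective π)
    (fun _ _ _ h => Subtype.ext (Subtype.ext h)) (fun _ _ _ h => Subtype.ext h)

theorem ConnectedOn.bpContr_apply_eq {α : Type*} {f : G.V → α} {v w : G.V} {C : Set G.V}
    {F : Set (G.bpContr v w C).E} (hc : (G.bpContr v w C).ConnectedOn Set.univ F)
    (hvw : f v = f w)
    (hf : ∀ e ∈ F, ∀ x y, G.ends (G.bpContrEdge v w C e) = s(x, y) → f x = f y) :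
    ∀ x ∈ C ∪ {v, w}, ∀ y ∈ C ∪ {v, w}, f x = f y := by
  refine bpContr_cases (fun H π => ∀ F : Set H.E, H.ConnectedOn Set.univ F →
      (∀ e ∈ F, ∀ x y, G.ends (π e) = s(x, y) → f x = f y) →
      ∀ x ∈ C ∪ {v, w}, ∀ y ∈ C ∪ {v, w}, f x = f y) ?_ ?_ F hc hf
  · intro _ F hc hf x hx y hy
    exact hc.contract_apply_eq (f := fun z : ↥(C ∪ {v, w}) => f z)
      (fun a b ⟨ha, hb⟩ => by rw [ha, hb, hvw])
      (fun e he a b hab => hf e he _ _ (induce_ends_eq hab)) ⟨x, hx⟩ ⟨y, hy⟩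
  · exact fun _ F hc hf => hc.induce_apply_eq hf

theorem connectedOn_of_bpPieces {X : Set G.E} {v w : G.V} {k : ℕ} {C : Fin k → Set G.V}
    (hcover : ∀ x ∉ ({v, w} : Set G.V), ∃ i, x ∈ C i) {j : Fin k}
    {Fj : Set (G.bpUp v w (C j)).E} (hFj : (G.bpUp v w (C j)).ConnectedOn Set.univ Fj)
    (hFjX : Subtype.val '' Fj ⊆ X) {Fi : ∀ i, Set (G.bpContr v w (C i)).E}
    (hFi : ∀ i ≠ j, (G.bpContr v w (C i)).ConnectedOn Set.univ (Fi i))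
    (hFiX : ∀ i ≠ j, G.bpContrEdge v w (C i) '' Fi i ⊆ X) :
    G.ConnectedOn Set.univ X := by
  let r : Setoid G.V := ⟨G.Reachable Set.univ X, reachable_equivalence _ _⟩
  have hX : ∀ e ∈ X, ∀ x y, G.ends e = s(x, y) → (⟦x⟧ : Quotient r) = ⟦y⟧ :=
    fun e he _ _ hends => Quotient.sound (.single ⟨trivial, trivial, e, he, hends⟩)
  have hj := hFj.induce_apply_eq fun e he => hX _ (hFjX ⟨e, he, rfl⟩)
  have hv : v ∈ C j ∪ {v, w} := by simp
  have hw : w ∈ C j ∪ {v, w} := by simp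
  have hvw := hj v hv w hw
  have to_v : ∀ x, (⟦x⟧ : Quotient r) = ⟦v⟧ := by
    intro x
    by_cases hx : x ∈ ({v, w} : Set G.V)
    · rcases hx with rfl | rfl
      exacts [rfl, hvw.symm]
    obtain ⟨i, hi⟩ := hcover x hx
    obtain rfl | hij := eq_or_ne i j
    · exact hj x (Or.inl hi) v hv
    · exact (hFi i hij).bpContr_apply_eq hvw (fun e he => hX _ (hFiX i hij ⟨e, he, rfl⟩))
        x (Or.inl hi) v (by simp)
  exact ⟨⟨v, trivial⟩, fun x _ y _ => Quotient.exact ((to_v x).trans (to_v y).symm)⟩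

end CostGraph

theorem union_of_piece_twoECSS_general (G : CostGraph)
    (v w : G.V)
    (k : ℕ) (C : Fin k → Set G.V)
    (hall : ∀ D, G.IsCompOf (({v, w} : Set G.V)ᶜ) Set.univ D → ∃ i, C i = D)
    (j : Fin k)
    (Fj : Set (G.bpUp v w (C j)).E) (hFj : (G.bpUp v w (C j)).TwoEC Fj)
    (Fi : ∀ i : Fin k, Set (G.bpContr v w (C i)).E)
    (hFi : ∀ i, i ≠ j → (G.bpContr v w (C i)).TwoEC (Fi i)) :
    G.TwoEC ((Subtype.val '' Fj) ∪
      ⋃ i ∈ {i : Fin k | i ≠ j}, G.bpContrEdge v w (C i) '' (Fi i)) := by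
  set F := (Subtype.val '' Fj) ∪
    ⋃ i ∈ {i : Fin k | i ≠ j}, G.bpContrEdge v w (C i) '' (Fi i)
  have hcover : ∀ x ∉ ({v, w} : Set G.V), ∃ i, x ∈ C i := fun x hx => by
    obtain ⟨D, hD, hxD⟩ := G.exists_isCompOf_mem Set.univ (Set.mem_compl hx)
    obtain ⟨i, rfl⟩ := hall D hD
    exact ⟨i, hxD⟩
  have hconn : ∀ D : Set G.E, D.Subsingleton → G.ConnectedOn Set.univ (F \ D) := fun D hD =>
    CostGraph.connectedOn_of_bpPieces hcover
      (hFj.connectedOn_sdiff (hD.preimage Subtype.val_injective))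
      (by rintro _ ⟨e, he, rfl⟩; exact ⟨.inl ⟨e, he.1, rfl⟩, he.2⟩)
      (fun i hij => (hFi i hij).connectedOn_sdiff
        (hD.preimage (CostGraph.bpContrEdge_injective v w (C i))))
      (by rintro i hij _ ⟨e, he, rfl⟩
          exact ⟨.inr (Set.mem_biUnion hij ⟨e, he.1, rfl⟩), he.2⟩)
  refine ⟨hFj.1.trans_le (G.ncard_univ_induce_le _), ?_,
    fun e => hconn {e} Set.subsingleton_singleton⟩
  simpa using hconn ∅ Set.subsingleton_empty

/-- Let `G` be a MAP instance, `{v,w}` a bad-pair of `G` with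
bp-components `C₁, …, C_k`, and `j` an index. Given a 2-ECSS `H_j` of `C_j^{v,w}`
and, for each `i ≠ j`, a 2-ECSS `H_i` of `C_i^⊘`, the union of the edge sets of
`H₁, …, H_k` is the edge set of a 2-ECSS of `G`. -/
theorem union_of_piece_twoECSS (G : CostGraph) (hG : G.IsMAP)
    (v w : G.V) (hbp : G.IsBadPair v w)
    (k : ℕ) (C : Fin k → Set G.V)
    (hC : ∀ i, G.IsCompOf (({v, w} : Set G.V)ᶜ) Set.univ (C i))
    (hall : ∀ D, G.IsCompOf (({v, w} : Set G.V)ᶜ) Set.univ D → ∃ i, C i = D)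
    (hinj : Function.Injective C)
    (j : Fin k)
    (Fj : Set (G.bpUp v w (C j)).E) (hFj : (G.bpUp v w (C j)).TwoEC Fj)
    (Fi : ∀ i : Fin k, Set (G.bpContr v w (C i)).E)
    (hFi : ∀ i, i ≠ j → (G.bpContr v w (C i)).TwoEC (Fi i)) :
    G.TwoEC ((Subtype.val '' Fj) ∪
      ⋃ i ∈ {i : Fin k | i ≠ j}, G.bpContrEdge v w (C i) '' (Fi i)) :=
  union_of_piece_twoECSS_general G v w k C hall j Fj hFj Fi hFi
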